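/- Let (G,E,φ_c) be a twisted Exel–Pardo tuple. Then the Cohn algebra C(G,E,φ_c) is a free ℓ-module with basis ℬ = {αgβ* : α,β ∈ 𝒫(E), g ∈ G, g(r(β)) = r(α)}. -/

import Mathlib

noncomputable section
open scoped Classical

/-- A directed graph: vertices, edges, source and range maps. -/
structure DirGraph : Type 1 where
  V : Type
  E : Type
  s : E → V
  r : E → V

namespace DirGraph

variable {Γ : DirGraph}

/-- A (raw) finite path: a source vertex together with a list of edges.
Paths of length `0` are vertices. -/
structure Path (Γ : DirGraph) : Type where
  src : Γ.V
  edges : List Γ.E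

/-- The range of a path. -/
def Path.rng (p : Path Γ) : Γ.V := p.edges.foldl (fun _ e => Γ.r e) p.src

/-- The length of a path. -/
def Path.length (p : Path Γ) : ℕ := p.edges.length

/-- A raw path is an actual path if consecutive edges are composable and the
first edge starts at the source vertex. -/
def Path.IsGood (p : Path Γ) : Prop :=
  (∀ e ∈ p.edges.head?, Γ.s e = p.src) ∧
    p.edges.Chain' fun e f => Γ.r e = Γ.s f

/-- The length-zero path at a vertex. -/
def ofVertex (Γ : DirGraph) (v : Γ.V) : Path Γ := ⟨v, []⟩

/-- The length-one path given by an edge. -/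
def ofEdge (Γ : DirGraph) (e : Γ.E) : Path Γ := ⟨Γ.s e, [e]⟩

/-- Concatenation of paths. -/
def Path.comp (p q : Path Γ) : Path Γ := ⟨p.src, p.edges ++ q.edges⟩

theorem ofVertex_isGood (Γ : DirGraph) (v : Γ.V) : (ofVertex Γ v).IsGood := by
  constructor <;> simp [ofVertex, Path.IsGood, List.Chain']

theorem ofEdge_isGood (Γ : DirGraph) (e : Γ.E) : (ofEdge Γ e).IsGood := by
  constructor <;> simp [ofEdge, Path.IsGood, List.Chain']

@[simp] theorem rng_ofVertex (Γ : DirGraph) (v : Γ.V) : (ofVertex Γ v).rng = v := rfl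

@[simp] theorem rng_ofEdge (Γ : DirGraph) (e : Γ.E) : (ofEdge Γ e).rng = Γ.r e := rfl

theorem rng_cons (v : Γ.V) (e : Γ.E) (l : List Γ.E) :
    Path.rng ⟨v, e :: l⟩ = Path.rng ⟨Γ.r e, l⟩ := rfl

theorem rng_eq_getLast {v : Γ.V} :
    ∀ {l : List Γ.E} {x : Γ.E}, x ∈ l.getLast? → Path.rng ⟨v, l⟩ = Γ.r x := by
  intro l
  induction l generalizing v with
  | nil => intro x hx; simp at hx
  | cons e l ih =>
    intro x hx
    cases l with
    | nil => simp_all [Path.rng]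
    | cons f l =>
      rw [List.getLast?_cons_cons] at hx
      rw [rng_cons]
      exact ih hx

theorem isGood_comp {p q : Path Γ} (hp : p.IsGood) (hq : q.IsGood)
    (h : p.rng = q.src) : (p.comp q).IsGood := by
  constructor
  · intro e he
    rcases p with ⟨v, l⟩
    cases l with
    | nil =>
      simp only [Path.comp, List.nil_append] at he ⊢
      have := hq.1 e he
      rw [this, ← h]; rfl
    | cons a l =>
      simp only [Path.comp, List.cons_append, List.head?_cons, Option.mem_def,
        Option.some.injEq] at he
      subst he
      exact hp.1 a (by simp)
  · refine List.IsChain.append hp.2 hq.2 ?_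
    intro x hx y hy
    have h1 : p.rng = Γ.r x := rng_eq_getLast hx
    have h2 : Γ.s y = q.src := hq.1 y hy
    rw [← h1, h, ← h2]

/-- The set of regular vertices: those emitting a finite nonzero number of edges. -/
def regSet (Γ : DirGraph) : Set Γ.V := {v | (Γ.s ⁻¹' {v}).Finite ∧ (Γ.s ⁻¹' {v}).Nonempty}

/-- The set of sinks. -/
def sinkSet (Γ : DirGraph) : Set Γ.V := {v | Γ.s ⁻¹' {v} = ∅}

end DirGraph
/-- A twisted Exel–Pardo tuple `(G, E, φ_c)`: a group `G` acting on the graph `Γ`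
by graph automorphisms, an Exel–Pardo `1`-cocycle `φ : G × E¹ → G` satisfying
`φ(g,e)(v) = g(v)`, and a `1`-cocycle `c : G × E¹ → 𝒰(ℓ)`. -/
structure TwistedEP (ℓ : Type) [CommRing ℓ] (Γ : DirGraph) (G : Type) [Group G] : Type where
  actV : G → Γ.V → Γ.V
  actE : G → Γ.E → Γ.E
  actV_one : ∀ v, actV 1 v = v
  actV_mul : ∀ g h v, actV (g * h) v = actV g (actV h v)
  actE_one : ∀ e, actE 1 e = e
  actE_mul : ∀ g h e, actE (g * h) e = actE g (actE h e)
  s_act : ∀ g e, Γ.s (actE g e) = actV g (Γ.s e)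
  r_act : ∀ g e, Γ.r (actE g e) = actV g (Γ.r e)
  φ : G → Γ.E → G
  φ_mul : ∀ g h e, φ (g * h) e = φ g (actE h e) * φ h e
  φ_actV : ∀ g e v, actV (φ g e) v = actV g v
  c : G → Γ.E → ℓˣ
  c_mul : ∀ g h e, c (g * h) e = c g (actE h e) * c h e

namespace TwistedEP

open DirGraph

variable {ℓ : Type} [CommRing ℓ] {Γ : DirGraph} {G : Type} [Group G] (T : TwistedEP ℓ Γ G)

theorem φ_one (e : Γ.E) : T.φ 1 e = 1 := by
  have h := T.φ_mul 1 1 e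
  rw [one_mul, T.actE_one] at h
  exact (left_eq_mul.mp h)

theorem c_one (e : Γ.E) : T.c 1 e = 1 := by
  have h := T.c_mul 1 1 e
  rw [one_mul, T.actE_one] at h
  exact (left_eq_mul.mp h)

theorem actV_inv_act (g : G) (v : Γ.V) : T.actV g⁻¹ (T.actV g v) = v := by
  rw [← T.actV_mul, inv_mul_cancel, T.actV_one]

theorem actV_act_inv (g : G) (v : Γ.V) : T.actV g (T.actV g⁻¹ v) = v := by
  rw [← T.actV_mul, mul_inv_cancel, T.actV_one]

theorem actE_act_inv (g : G) (e : Γ.E) : T.actE g (T.actE g⁻¹ e) = e := by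
  rw [← T.actE_mul, mul_inv_cancel, T.actE_one]

/-- The extension of the `G`-action to lists of edges. -/
def actL : G → List Γ.E → List Γ.E
  | _, [] => []
  | g, e :: l => T.actE g e :: actL (T.φ g e) l

/-- The extension of the cocycle `φ` to lists of edges. -/
def φL : G → List Γ.E → G
  | g, [] => g
  | g, e :: l => φL (T.φ g e) l

/-- The extension of the twist `c` to lists of edges. -/
def cL : G → List Γ.E → ℓˣ
  | _, [] => 1
  | g, e :: l => T.c g e * cL (T.φ g e) l

/-- The extension of the `G`-action to finite paths. -/
def actP (g : G) (p : Path Γ) : Path Γ := ⟨T.actV g p.src, T.actL g p.edges⟩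

/-- The extension of the cocycle `φ` to finite paths. -/
def φP (g : G) (p : Path Γ) : G := T.φL g p.edges

/-- The extension of the twist `c` to finite paths. -/
def cP (g : G) (p : Path Γ) : ℓˣ := T.cL g p.edges

@[simp] theorem actL_nil (g : G) : T.actL g ([] : List Γ.E) = [] := rfl

@[simp] theorem actL_cons (g : G) (e : Γ.E) (l : List Γ.E) :
    T.actL g (e :: l) = T.actE g e :: T.actL (T.φ g e) l := rfl

theorem φ_actV_edges : ∀ (l : List Γ.E) (g : G) (v : Γ.V),
    T.actV (T.φL g l) v = T.actV g v := by
  intro l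
  induction l with
  | nil => intro g v; rfl
  | cons e l ih =>
    intro g v
    show T.actV (T.φL (T.φ g e) l) v = _
    rw [ih (T.φ g e) v, T.φ_actV]

theorem rng_actP : ∀ (p : Path Γ) (g : G), (T.actP g p).rng = T.actV g p.rng := by
  intro ⟨v, l⟩
  induction l generalizing v with
  | nil => intro g; rfl
  | cons e l ih =>
    intro g
    show Path.rng ⟨T.actV g v, T.actE g e :: T.actL (T.φ g e) l⟩ = _
    rw [DirGraph.rng_cons, DirGraph.rng_cons]
    have h1 : Path.rng ⟨Γ.r (T.actE g e), T.actL (T.φ g e) l⟩ =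
        Path.rng ⟨T.actV (T.φ g e) (Γ.r e), T.actL (T.φ g e) l⟩ := by
      rw [T.r_act, T.φ_actV]
    rw [h1]
    have h2 := ih (Γ.r e) (T.φ g e)
    show (T.actP (T.φ g e) ⟨Γ.r e, l⟩).rng = _
    rw [h2, T.φ_actV]

theorem src_actP (p : Path Γ) (g : G) : (T.actP g p).src = T.actV g p.src := rfl

theorem chain_actL : ∀ (l : List Γ.E) (g : G),
    l.Chain' (fun e f => Γ.r e = Γ.s f) →
      (T.actL g l).Chain' (fun e f => Γ.r e = Γ.s f) := by
  intro l
  induction l with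
  | nil => intro g _; exact List.isChain_nil
  | cons e l ih =>
    intro g h
    rw [T.actL_cons]
    cases l with
    | nil => simp [List.Chain']
    | cons f l =>
      simp only [List.Chain', List.isChain_cons_cons] at h
      have ihh := ih (T.φ g e) h.2
      rw [T.actL_cons] at ihh ⊢
      simp only [List.Chain', List.isChain_cons_cons]
      refine ⟨?_, ihh⟩
      rw [T.r_act, T.s_act, T.φ_actV, h.1]

theorem isGood_actP {p : Path Γ} (g : G) (hp : p.IsGood) : (T.actP g p).IsGood := by
  rcases p with ⟨v, l⟩
  constructor
  · intro e he
    cases l with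
    | nil => simp [actP] at he
    | cons a l =>
      rw [show (T.actP g ⟨v, a :: l⟩).edges = T.actE g a :: T.actL (T.φ g a) l from rfl] at he
      simp only [List.head?_cons, Option.mem_def, Option.some.injEq] at he
      subst he
      rw [T.s_act, hp.1 a (by simp)]
      rfl
  · exact T.chain_actL l g hp.2

end TwistedEP
/-- The generators `v`, `vg`, `e`, `eg`, `e*`, `ge*` of the Cohn algebra. -/
inductive CohnGen (Γ : DirGraph) (G : Type) : Type
  | v (v : Γ.V)
  | vg (v : Γ.V) (g : G)
  | e (e : Γ.E)
  | eg (e : Γ.E) (g : G)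
  | st (e : Γ.E)
  | gst (g : G) (e : Γ.E)

namespace TwistedEP

open DirGraph

variable {ℓ : Type} [CommRing ℓ] {Γ : DirGraph} {G : Type} [Group G] (T : TwistedEP ℓ Γ G)

/-- Abbreviation for the free algebra on the Cohn generators. -/
abbrev FreeCohn (ℓ : Type) [CommRing ℓ] (Γ : DirGraph) (G : Type) : Type :=
  FreeAlgebra ℓ (CohnGen Γ G)

/-- `ι x` is the image of the generator `x` in the free algebra. -/
abbrev ι (x : CohnGen Γ G) : FreeCohn ℓ Γ G := FreeAlgebra.ι ℓ x

/-- The defining relations of the Cohn algebra `C(G,E,φ_c)` of a twisted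
Exel–Pardo tuple. -/
inductive CohnRel : FreeCohn ℓ Γ G → FreeCohn ℓ Γ G → Prop
  | v_eq (v : Γ.V) : CohnRel (ι (.v v)) (ι (.vg v 1))
  | e_eq (e : Γ.E) : CohnRel (ι (.e e)) (ι (.eg e 1))
  | st_eq (e : Γ.E) : CohnRel (ι (.st e)) (ι (.gst 1 e))
  | eg_eq (e : Γ.E) (g : G) :
      CohnRel (ι (.eg e g)) (ι (.v (Γ.s e)) * ι (.e e) * ι (.vg (Γ.r e) g))
  | gst_eq (g : G) (e : Γ.E) :
      CohnRel (ι (.gst g e))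
        (ι (.vg (T.actV g (Γ.r e)) g) * ι (.st e) * ι (.v (Γ.s e)))
  | st_e (e f : Γ.E) :
      CohnRel (ι (.st e) * ι (.e f)) (if e = f then ι (.v (Γ.r e)) else 0)
  | vg_vg (v : Γ.V) (g : G) (w : Γ.V) (h : G) :
      CohnRel (ι (.vg v g) * ι (.vg w h))
        (if v = T.actV g w then ι (.vg v (g * h)) else 0)
  | vg_e (v : Γ.V) (g : G) (e : Γ.E) :
      CohnRel (ι (.vg v g) * ι (.e e))
        (if v = T.actV g (Γ.s e) then
          (T.c g e : ℓ) • ι (.eg (T.actE g e) (T.φ g e)) else 0)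
  | st_vg (e : Γ.E) (v : Γ.V) (g : G) :
      CohnRel (ι (.st e) * ι (.vg v g))
        (if v = Γ.s e then
          (T.c g (T.actE g⁻¹ e) : ℓ) •
            ι (.gst (T.φ g (T.actE g⁻¹ e)) (T.actE g⁻¹ e)) else 0)

/-- The Cohn algebra `C(G,E,φ_c)` of a twisted Exel–Pardo tuple, presented by
generators and relations.  (For infinite `E⁰` this `RingQuot` is the
unitalization of the Cohn algebra; the Cohn algebra itself is the non-unital
subalgebra generated by the generators, see `TwistedEP.cohnPart`.) -/
abbrev CQ : Type := RingQuot (CohnRel T)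

/-- The quotient map from the free algebra to the Cohn algebra. -/
abbrev mkC : FreeCohn ℓ Γ G →ₐ[ℓ] CQ T := RingQuot.mkAlgHom ℓ (CohnRel T)

/-- The element `vg` of the Cohn algebra. -/
def xvg (v : Γ.V) (g : G) : CQ T := T.mkC (ι (.vg v g))

/-- The element `v` of the Cohn algebra. -/
def xv (v : Γ.V) : CQ T := T.mkC (ι (.v v))

/-- The element `e` of the Cohn algebra. -/
def xe (e : Γ.E) : CQ T := T.mkC (ι (.e e))

/-- The element `eg` of the Cohn algebra. -/
def xeg (e : Γ.E) (g : G) : CQ T := T.mkC (ι (.eg e g))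

/-- The element `e*` of the Cohn algebra. -/
def xst (e : Γ.E) : CQ T := T.mkC (ι (.st e))

/-- The element `ge*` of the Cohn algebra. -/
def xgst (g : G) (e : Γ.E) : CQ T := T.mkC (ι (.gst g e))

/-- The image `α ∈ C(G,E,φ_c)` of a path `α`, i.e. the product of (the source
vertex and) its edges. -/
def pathElem (p : Path Γ) : CQ T :=
  p.edges.foldl (fun a e => a * T.xe e) (T.xv p.src)

/-- The image `β* ∈ C(G,E,φ_c)` of the formal adjoint of a path `β`, i.e. the
product of the starred edges of `β` in reverse order. -/
def starElem (p : Path Γ) : CQ T :=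
  p.edges.foldr (fun e a => a * T.xst e) (T.xv p.rng)

/-- The element `α g β*` of the Cohn algebra. -/
def mixElem (α : Path Γ) (g : G) (β : Path Γ) : CQ T :=
  T.pathElem α * T.xvg α.rng g * T.starElem β

/-- The element `q_v g = vg - ∑_{s(e)=v} e ⬝ φ_c(g, g⁻¹(e)) ⬝ (g⁻¹(e))*` of the
Cohn algebra.  (The `finsum` is zero unless `v` emits finitely many edges;
`q_v g` is used for regular `v` only.) -/
def qElem (v : Γ.V) (g : G) : CQ T :=
  T.xvg v g - ∑ᶠ e ∈ Γ.s ⁻¹' {v},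
    (T.c g (T.actE g⁻¹ e) : ℓ) •
      (T.xe e * T.xgst (T.φ g (T.actE g⁻¹ e)) (T.actE g⁻¹ e))

/-- The two-sided ideal `𝒦(G,E,φ_c) ⊴ C(G,E,φ_c)` generated by the elements
`q_v`, `v` regular, regarded as an `ℓ`-submodule. -/
def KIdeal : Submodule ℓ (CQ T) :=
  Submodule.span ℓ
    {x | ∃ v ∈ regSet Γ, ∃ a b : CQ T, x = a * T.qElem v 1 * b}

/-- The set of generators of the Cohn algebra. -/
def genSet : Set (CQ T) := Set.range fun x : CohnGen Γ G => T.mkC (ι x)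

/-- The Cohn algebra `C(G,E,φ_c)` itself (it is in general non-unital): the
non-unital subalgebra of `CQ` generated by the generators, regarded as an
`ℓ`-submodule. -/
def cohnPart : Submodule ℓ (CQ T) :=
  (NonUnitalAlgebra.adjoin ℓ (T.genSet)).toSubmodule

end TwistedEP

namespace TwistedEP

open DirGraph

variable {ℓ : Type} [CommRing ℓ] {Γ : DirGraph} {G : Type} [Group G] (T : TwistedEP ℓ Γ G)

/-- The index set of the family `ℬ = {α g β* : α, β ∈ 𝒫(E), g ∈ G, g(r(β)) = r(α)}`. -/
def BIdx : Type :=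
  {x : Path Γ × G × Path Γ //
    x.1.IsGood ∧ x.2.2.IsGood ∧ T.actV x.2.1 x.2.2.rng = x.1.rng}

/-- The family `ℬ`, `(α, g, β) ↦ α g β*`. -/
def BFam (i : T.BIdx) : CQ T := T.mixElem i.1.1 i.1.2.1 i.1.2.2

end TwistedEP

/-!
Let `M` be the free `ℓ`-module on all formal triples `(α, g, β)`. Letting the generators act on
`M` by the rules that multiply a normal form `α g β*` on the left gives a representation `rep`
of `C(G,E,φ_c)`: each defining relation becomes an identity of operators, checked on basis
vectors. For `|β₀| ≤ |β|`, the element `α g β*` sends the vector `(β₀, 1, β₀)` to `(α, g, β)` if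
`β₀` is an initial segment of `β` and to `0` otherwise, so testing a vanishing combination of `ℬ`
against `(β₀, 1, β₀)` for a summand with `|β₀|` minimal isolates its coefficient.
The same multiplication rules, read in `C(G,E,φ_c)`, show that the span of `ℬ` contains the
generators and is stable under left multiplication by them, so it is the non-unital subalgebra
they generate.
-/

namespace DirGraph

variable {Γ : DirGraph}

@[simp] theorem Path.rng_nil (v : Γ.V) : Path.rng ⟨v, []⟩ = v := rfl

@[simp] theorem ofVertex_src (v : Γ.V) : (ofVertex Γ v).src = v := rfl

@[simp] theorem ofEdge_comp_src (e : Γ.E) (p : Path Γ) : ((ofEdge Γ e).comp p).src = Γ.s e :=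
  rfl

theorem Path.IsGood.source_eq {v : Γ.V} {e : Γ.E} {l : List Γ.E}
    (h : (⟨v, e :: l⟩ : Path Γ).IsGood) : Γ.s e = v :=
  h.1 e rfl

theorem Path.IsGood.tail {v : Γ.V} {e : Γ.E} {l : List Γ.E}
    (h : (⟨v, e :: l⟩ : Path Γ).IsGood) : (⟨Γ.r e, l⟩ : Path Γ).IsGood :=
  ⟨fun f hf => ((List.isChain_cons.mp h.2).1 f hf).symm, (List.isChain_cons.mp h.2).2⟩

theorem Path.rng_comp_ofEdge (p : Path Γ) (e : Γ.E) : (p.comp (ofEdge Γ e)).rng = Γ.r e :=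
  rng_eq_getLast (List.getLast?_concat ..)

theorem ofEdge_comp (e : Γ.E) (p : Path Γ) : (ofEdge Γ e).comp p = ⟨Γ.s e, e :: p.edges⟩ := rfl

end DirGraph

namespace TwistedEP

open DirGraph

section PathAction

variable {ℓ : Type} [CommRing ℓ] {Γ : DirGraph} {G : Type} [Group G] (T : TwistedEP ℓ Γ G)

@[simp] theorem φL_nil (g : G) : T.φL g ([] : List Γ.E) = g := rfl

@[simp] theorem φL_cons (g : G) (e : Γ.E) (l : List Γ.E) :
    T.φL g (e :: l) = T.φL (T.φ g e) l := rfl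

@[simp] theorem cL_nil (g : G) : T.cL g ([] : List Γ.E) = 1 := rfl

@[simp] theorem cL_cons (g : G) (e : Γ.E) (l : List Γ.E) :
    T.cL g (e :: l) = T.c g e * T.cL (T.φ g e) l := rfl

theorem actE_inv_act (g : G) (e : Γ.E) : T.actE g⁻¹ (T.actE g e) = e := by
  rw [← T.actE_mul, inv_mul_cancel, T.actE_one]

theorem actV_injective (g : G) : Function.Injective (T.actV g) :=
  Function.LeftInverse.injective (T.actV_inv_act g)

theorem actE_injective (g : G) : Function.Injective (T.actE g) :=
  Function.LeftInverse.injective (T.actE_inv_act g)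

theorem actL_one (l : List Γ.E) : T.actL 1 l = l := by
  induction l with
  | nil => rfl
  | cons e l ih => rw [actL_cons, T.actE_one, T.φ_one, ih]

theorem φL_one (l : List Γ.E) : T.φL 1 l = 1 := by
  induction l with
  | nil => rfl
  | cons e l ih => rw [φL_cons, T.φ_one, ih]

theorem cL_one (l : List Γ.E) : T.cL 1 l = 1 := by
  induction l with
  | nil => rfl
  | cons e l ih => rw [cL_cons, T.c_one, T.φ_one, ih, mul_one]

theorem actL_mul (l : List Γ.E) (g h : G) : T.actL (g * h) l = T.actL g (T.actL h l) := by
  induction l generalizing g h with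
  | nil => rfl
  | cons e l ih => rw [actL_cons, actL_cons, actL_cons, T.actE_mul, T.φ_mul, ih]

theorem φL_mul (l : List Γ.E) (g h : G) :
    T.φL (g * h) l = T.φL g (T.actL h l) * T.φL h l := by
  induction l generalizing g h with
  | nil => rfl
  | cons e l ih => rw [actL_cons, φL_cons, φL_cons, φL_cons, T.φ_mul, ih]

theorem cL_mul (l : List Γ.E) (g h : G) :
    T.cL (g * h) l = T.cL g (T.actL h l) * T.cL h l := by
  induction l generalizing g h with
  | nil => exact (mul_one 1).symm
  | cons e l ih =>
    rw [actL_cons, cL_cons, cL_cons, cL_cons, T.c_mul, T.φ_mul, ih, mul_mul_mul_comm]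

theorem actP_one (p : Path Γ) : T.actP 1 p = p := by
  rw [actP, T.actV_one, T.actL_one]

theorem actP_mul (g h : G) (p : Path Γ) : T.actP (g * h) p = T.actP g (T.actP h p) := by
  rw [actP, actP, actP, T.actV_mul, T.actL_mul]

theorem actP_mk_nil (g : G) (v : Γ.V) : T.actP g ⟨v, []⟩ = ⟨T.actV g v, []⟩ := rfl

theorem actP_mk_cons (g : G) (v : Γ.V) (e : Γ.E) (l : List Γ.E) :
    T.actP g ⟨v, e :: l⟩ = ⟨T.actV g v, T.actE g e :: T.actL (T.φ g e) l⟩ := rfl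

theorem actP_ofVertex (g : G) (v : Γ.V) : T.actP g (ofVertex Γ v) = ofVertex Γ (T.actV g v) :=
  rfl

theorem φP_ofVertex (g : G) (v : Γ.V) : T.φP g (ofVertex Γ v) = g := rfl

theorem cP_ofVertex (g : G) (v : Γ.V) : T.cP g (ofVertex Γ v) = 1 := rfl

theorem φP_mk (g : G) (v : Γ.V) (l : List Γ.E) : T.φP g ⟨v, l⟩ = T.φL g l := rfl

theorem cP_mk (g : G) (v : Γ.V) (l : List Γ.E) : T.cP g ⟨v, l⟩ = T.cL g l := rfl

theorem φP_mul (g h : G) (p : Path Γ) :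
    T.φP (g * h) p = T.φP g (T.actP h p) * T.φP h p :=
  T.φL_mul p.edges g h

theorem cP_mul (g h : G) (p : Path Γ) :
    T.cP (g * h) p = T.cP g (T.actP h p) * T.cP h p :=
  T.cL_mul p.edges g h

end PathAction

section Relations

variable {ℓ : Type} [CommRing ℓ] {Γ : DirGraph} {G : Type} [Group G] (T : TwistedEP ℓ Γ G)

theorem xv_eq (v : Γ.V) : T.xv v = T.xvg v 1 :=
  RingQuot.mkAlgHom_rel ℓ (CohnRel.v_eq v)

theorem xe_eq (e : Γ.E) : T.xe e = T.xeg e 1 :=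
  RingQuot.mkAlgHom_rel ℓ (CohnRel.e_eq e)

theorem xst_eq (e : Γ.E) : T.xst e = T.xgst 1 e :=
  RingQuot.mkAlgHom_rel ℓ (CohnRel.st_eq e)

theorem xeg_eq (e : Γ.E) (g : G) :
    T.xeg e g = T.xv (Γ.s e) * T.xe e * T.xvg (Γ.r e) g := by
  have h := RingQuot.mkAlgHom_rel ℓ (CohnRel.eg_eq (T := T) e g)
  rw [map_mul, map_mul] at h
  exact h

theorem xgst_eq (g : G) (e : Γ.E) :
    T.xgst g e = T.xvg (T.actV g (Γ.r e)) g * T.xst e * T.xv (Γ.s e) := by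
  have h := RingQuot.mkAlgHom_rel ℓ (CohnRel.gst_eq (T := T) g e)
  rw [map_mul, map_mul] at h
  exact h

theorem xst_mul_xe (e f : Γ.E) :
    T.xst e * T.xe f = if e = f then T.xv (Γ.r e) else 0 := by
  have h := RingQuot.mkAlgHom_rel ℓ (CohnRel.st_e (T := T) e f)
  rw [map_mul, apply_ite T.mkC, map_zero] at h
  exact h

theorem xvg_mul_xvg (v : Γ.V) (g : G) (w : Γ.V) (h : G) :
    T.xvg v g * T.xvg w h = if v = T.actV g w then T.xvg v (g * h) else 0 := by
  have h := RingQuot.mkAlgHom_rel ℓ (CohnRel.vg_vg (T := T) v g w h)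
  rw [map_mul, apply_ite T.mkC, map_zero] at h
  exact h

theorem xvg_mul_xe (v : Γ.V) (g : G) (e : Γ.E) :
    T.xvg v g * T.xe e =
      if v = T.actV g (Γ.s e) then (T.c g e : ℓ) • T.xeg (T.actE g e) (T.φ g e) else 0 := by
  have h := RingQuot.mkAlgHom_rel ℓ (CohnRel.vg_e (T := T) v g e)
  rw [map_mul, apply_ite T.mkC, map_zero, map_smul] at h
  exact h

theorem xst_mul_xvg (e : Γ.E) (v : Γ.V) (g : G) :
    T.xst e * T.xvg v g = if v = Γ.s e then
      (T.c g (T.actE g⁻¹ e) : ℓ) • T.xgst (T.φ g (T.actE g⁻¹ e)) (T.actE g⁻¹ e) else 0 := by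
  have h := RingQuot.mkAlgHom_rel ℓ (CohnRel.st_vg (T := T) e v g)
  rw [map_mul, apply_ite T.mkC, map_zero, map_smul] at h
  exact h

theorem xv_mul_xvg (v w : Γ.V) (h : G) :
    T.xv v * T.xvg w h = if v = w then T.xvg v h else 0 := by
  rw [T.xv_eq, T.xvg_mul_xvg, T.actV_one, one_mul]

theorem xvg_mul_xv (v : Γ.V) (g : G) (w : Γ.V) :
    T.xvg v g * T.xv w = if v = T.actV g w then T.xvg v g else 0 := by
  rw [T.xv_eq, T.xvg_mul_xvg, mul_one]

theorem xv_mul_xv (v w : Γ.V) : T.xv v * T.xv w = if v = w then T.xv v else 0 := by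
  rw [T.xv_eq w, T.xv_mul_xvg, ← T.xv_eq]

theorem xv_mul_xe (e : Γ.E) : T.xv (Γ.s e) * T.xe e = T.xe e := by
  rw [T.xv_eq, T.xvg_mul_xe, if_pos (T.actV_one _).symm, T.actE_one, T.φ_one, T.c_one,
    Units.val_one, one_smul, ← T.xe_eq]

theorem xe_eq_mul_xvg_one (e : Γ.E) : T.xe e = T.xv (Γ.s e) * T.xe e * T.xvg (Γ.r e) 1 := by
  rw [← T.xeg_eq, ← T.xe_eq]

theorem xe_mul_xvg (e : Γ.E) (g : G) : T.xe e * T.xvg (Γ.r e) g = T.xeg e g := by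
  rw [T.xe_eq_mul_xvg_one, mul_assoc, T.xvg_mul_xvg, if_pos (T.actV_one _).symm, one_mul,
    ← T.xeg_eq]

theorem xe_mul_xv (e : Γ.E) (w : Γ.V) :
    T.xe e * T.xv w = if Γ.r e = w then T.xe e else 0 := by
  rw [T.xe_eq_mul_xvg_one, mul_assoc, T.xvg_mul_xv, T.actV_one, mul_ite, mul_zero,
    ← T.xeg_eq, ← T.xe_eq]

theorem xst_mul_xv (e : Γ.E) : T.xst e * T.xv (Γ.s e) = T.xst e := by
  rw [T.xv_eq, T.xst_mul_xvg, if_pos rfl, inv_one, T.actE_one, T.φ_one, T.c_one,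
    Units.val_one, one_smul, ← T.xst_eq]

theorem xgst_eq_xvg_mul_xst (g : G) (e : Γ.E) :
    T.xgst g e = T.xvg (T.actV g (Γ.r e)) g * T.xst e := by
  rw [T.xgst_eq, mul_assoc, T.xst_mul_xv]

theorem xv_mul_xst (e : Γ.E) : T.xv (Γ.r e) * T.xst e = T.xst e := by
  have h := T.xgst_eq_xvg_mul_xst 1 e
  rw [← T.xst_eq, T.actV_one] at h
  rw [T.xv_eq, ← h]

end Relations

section PathElements

variable {ℓ : Type} [CommRing ℓ] {Γ : DirGraph} {G : Type} [Group G] (T : TwistedEP ℓ Γ G)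

theorem foldl_mul_xe (x y : CQ T) (l : List Γ.E) :
    l.foldl (fun a e => a * T.xe e) (x * y) = x * l.foldl (fun a e => a * T.xe e) y := by
  induction l generalizing y with
  | nil => rfl
  | cons e l ih =>
    show l.foldl _ (x * y * T.xe e) = _
    rw [mul_assoc, ih]
    rfl

theorem pathElem_nil (v : Γ.V) : T.pathElem ⟨v, []⟩ = T.xv v := rfl

theorem pathElem_cons {v : Γ.V} {e : Γ.E} (h : Γ.s e = v) (l : List Γ.E) :
    T.pathElem ⟨v, e :: l⟩ = T.xe e * T.pathElem ⟨Γ.r e, l⟩ := by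
  have hswap : T.xv v * T.xe e = T.xe e * T.xv (Γ.r e) := by
    rw [← h, T.xv_mul_xe, T.xe_mul_xv, if_pos rfl]
  show l.foldl _ (T.xv v * T.xe e) = _
  rw [hswap, T.foldl_mul_xe]
  rfl

theorem starElem_nil (v : Γ.V) : T.starElem ⟨v, []⟩ = T.xv v := rfl

theorem starElem_cons (v : Γ.V) (e : Γ.E) (l : List Γ.E) :
    T.starElem ⟨v, e :: l⟩ = T.starElem ⟨Γ.r e, l⟩ * T.xst e := rfl

theorem starElem_comp_ofEdge {β : Path Γ} {a : Γ.E} (h : β.rng = Γ.s a) :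
    T.starElem (β.comp (ofEdge Γ a)) = T.xst a * T.starElem β := by
  obtain ⟨w, l⟩ := β
  induction l generalizing w with
  | nil =>
    change T.xv (Γ.r a) * T.xst a = T.xst a * T.xv w
    rw [T.xv_mul_xst, show w = Γ.s a from h, T.xst_mul_xv]
  | cons e l ih =>
    change _ * T.xst e = T.xst a * (T.starElem ⟨Γ.r e, l⟩ * T.xst e)
    rw [← mul_assoc, ← ih (Γ.r e) h]
    rfl

theorem xv_src_mul_pathElem (p : Path Γ) : T.xv p.src * T.pathElem p = T.pathElem p := by
  rw [pathElem, ← T.foldl_mul_xe, T.xv_mul_xv, if_pos rfl]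

theorem xe_mul_pathElem (e : Γ.E) (p : Path Γ) :
    T.xe e * T.pathElem p =
      if Γ.r e = p.src then T.pathElem ((ofEdge Γ e).comp p) else 0 := by
  split_ifs with h
  · rw [ofEdge_comp, T.pathElem_cons rfl, h]
  · rw [← T.xv_src_mul_pathElem, ← mul_assoc, T.xe_mul_xv, if_neg h, zero_mul]

theorem xvg_mul_pathElem {p : Path Γ} (hp : p.IsGood) (w : Γ.V) (h : G) :
    T.xvg w h * T.pathElem p = if w = T.actV h p.src then
      (T.cP h p : ℓ) • (T.pathElem (T.actP h p) * T.xvg (T.actP h p).rng (T.φP h p)) else 0 := by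
  obtain ⟨v, l⟩ := p
  induction l generalizing v w h with
  | nil =>
    rw [T.pathElem_nil, T.xvg_mul_xv, T.actP_mk_nil, T.cP_mk, T.φP_mk, cL_nil, φL_nil,
      Units.val_one, one_smul, T.pathElem_nil, Path.rng_nil, T.xv_mul_xvg, if_pos rfl]
    split_ifs with hw <;> simp only [hw]
  | cons e l ih =>
    have hre : Γ.r (T.actE h e) = T.actV (T.φ h e) (Γ.r e) := by rw [T.r_act, T.φ_actV]
    rw [T.pathElem_cons hp.source_eq, ← mul_assoc, T.xvg_mul_xe, hp.source_eq]
    split_ifs with hw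
    · have hact : T.actP h ⟨v, e :: l⟩ =
          (ofEdge Γ (T.actE h e)).comp (T.actP (T.φ h e) ⟨Γ.r e, l⟩) := by
        rw [ofEdge_comp, T.s_act, hp.source_eq]
        rfl
      rw [smul_mul_assoc, ← T.xe_mul_xvg, mul_assoc, hre, ih _ _ _ hp.tail, if_pos rfl,
        mul_smul_comm, smul_smul, ← mul_assoc, T.xe_mul_pathElem, src_actP, if_pos hre, ← hact,
        T.rng_actP, T.rng_actP, T.φ_actV]
      rfl
    · rw [zero_mul]

end PathElements

section NormalForms

variable {ℓ : Type} [CommRing ℓ] {Γ : DirGraph} {G : Type}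

/-- `(α, g, β)` stands for the normal form `α g β*`; the paths need not be composable. -/
abbrev Triple (Γ : DirGraph) (G : Type) : Type := Path Γ × G × Path Γ

def edgeOp (e : Γ.E) : Module.End ℓ (Triple Γ G →₀ ℓ) :=
  Finsupp.linearCombination ℓ fun t =>
    if Γ.r e = t.1.src then Finsupp.single ((ofEdge Γ e).comp t.1, t.2) 1 else 0

theorem edgeOp_single (e : Γ.E) (α : Path Γ) (g : G) (β : Path Γ) (r : ℓ) :
    edgeOp e (Finsupp.single (α, g, β) r) =
      if Γ.r e = α.src then Finsupp.single ((ofEdge Γ e).comp α, g, β) r else 0 := by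
  simp [edgeOp, smul_ite, Finsupp.smul_single]

variable [Group G] (T : TwistedEP ℓ Γ G)

def vgOp (w : Γ.V) (h : G) : Module.End ℓ (Triple Γ G →₀ ℓ) :=
  Finsupp.linearCombination ℓ fun t => if w = T.actV h t.1.src then
    Finsupp.single (T.actP h t.1, T.φP h t.1 * t.2.1, t.2.2) (T.cP h t.1 : ℓ) else 0

/-- On `v h β*` this is `e* (vh) = φ_c(h, h⁻¹(e)) (h⁻¹(e))*`, on `f α h β*` it is
`e* f = δ_{e,f} r(e)`. -/
def ghostOp (e : Γ.E) : Module.End ℓ (Triple Γ G →₀ ℓ) :=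
  Finsupp.linearCombination ℓ fun
    | (⟨v, []⟩, h, β) => if v = Γ.s e then
        Finsupp.single (ofVertex Γ (Γ.r e), T.φ h (T.actE h⁻¹ e),
          β.comp (ofEdge Γ (T.actE h⁻¹ e))) (T.c h (T.actE h⁻¹ e) : ℓ) else 0
    | (⟨v, f :: l⟩, h, β) =>
        if f = e ∧ v = Γ.s e then Finsupp.single (⟨Γ.r e, l⟩, h, β) 1 else 0

theorem vgOp_single (w : Γ.V) (h : G) (α : Path Γ) (g : G) (β : Path Γ) (r : ℓ) :
    T.vgOp w h (Finsupp.single (α, g, β) r) = if w = T.actV h α.src then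
      Finsupp.single (T.actP h α, T.φP h α * g, β) (r * T.cP h α) else 0 := by
  simp [vgOp, smul_ite, Finsupp.smul_single]

theorem vgOp_one_single (w : Γ.V) (α : Path Γ) (g : G) (β : Path Γ) (r : ℓ) :
    T.vgOp w 1 (Finsupp.single (α, g, β) r) =
      if w = α.src then Finsupp.single (α, g, β) r else 0 := by
  simp [vgOp_single, T.actV_one, T.actP_one, φP, T.φL_one, cP, T.cL_one]

theorem ghostOp_single_nil (e : Γ.E) (v : Γ.V) (g : G) (β : Path Γ) (r : ℓ) :
    T.ghostOp e (Finsupp.single (⟨v, []⟩, g, β) r) = if v = Γ.s e then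
      Finsupp.single (ofVertex Γ (Γ.r e), T.φ g (T.actE g⁻¹ e), β.comp (ofEdge Γ (T.actE g⁻¹ e)))
        (r * T.c g (T.actE g⁻¹ e)) else 0 := by
  simp [ghostOp, smul_ite, Finsupp.smul_single]

theorem ghostOp_single_cons (e f : Γ.E) (v : Γ.V) (l : List Γ.E) (g : G) (β : Path Γ)
    (r : ℓ) : T.ghostOp e (Finsupp.single (⟨v, f :: l⟩, g, β) r) =
      if f = e ∧ v = Γ.s e then Finsupp.single (⟨Γ.r e, l⟩, g, β) r else 0 := by
  simp [ghostOp, smul_ite, Finsupp.smul_single]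

theorem edgeOp_mul_vgOp_one (e : Γ.E) :
    edgeOp e * T.vgOp (Γ.r e) 1 = (edgeOp e : Module.End ℓ (Triple Γ G →₀ ℓ)) := by
  refine Finsupp.lhom_ext fun ⟨α, g, β⟩ r => ?_
  rw [Module.End.mul_apply, T.vgOp_one_single, edgeOp_single]
  split_ifs <;> simp [edgeOp_single, *]

theorem vgOp_one_mul_edgeOp (e : Γ.E) :
    T.vgOp (Γ.s e) 1 * edgeOp e = (edgeOp e : Module.End ℓ (Triple Γ G →₀ ℓ)) := by
  refine Finsupp.lhom_ext fun ⟨α, g, β⟩ r => ?_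
  rw [Module.End.mul_apply, edgeOp_single]
  split_ifs <;> simp [T.vgOp_one_single]

theorem vgOp_one_mul_ghostOp (e : Γ.E) : T.vgOp (Γ.r e) 1 * T.ghostOp e = T.ghostOp e := by
  refine Finsupp.lhom_ext fun ⟨⟨v, l⟩, g, β⟩ r => ?_
  rw [Module.End.mul_apply]
  cases l with
  | nil =>
    rw [T.ghostOp_single_nil]
    split_ifs
    · exact (T.vgOp_one_single ..).trans (if_pos rfl)
    · exact map_zero _
  | cons f l =>
    rw [T.ghostOp_single_cons]
    split_ifs
    · exact (T.vgOp_one_single ..).trans (if_pos rfl)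
    · exact map_zero _

theorem ghostOp_mul_vgOp_one (e : Γ.E) : T.ghostOp e * T.vgOp (Γ.s e) 1 = T.ghostOp e := by
  refine Finsupp.lhom_ext fun ⟨⟨v, l⟩, g, β⟩ r => ?_
  rw [Module.End.mul_apply, T.vgOp_one_single]
  cases l with
  | nil => by_cases hv : v = Γ.s e <;> simp [T.ghostOp_single_nil, hv, eq_comm]
  | cons f l => by_cases hv : v = Γ.s e <;> simp [T.ghostOp_single_cons, hv, eq_comm]

theorem ghostOp_mul_edgeOp (e f : Γ.E) :
    T.ghostOp e * edgeOp f = if e = f then T.vgOp (Γ.r e) 1 else 0 := by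
  refine Finsupp.lhom_ext fun ⟨α, g, β⟩ r => ?_
  rw [Module.End.mul_apply, edgeOp_single]
  by_cases hef : e = f
  · subst hef
    rw [if_pos rfl]
    split_ifs <;> simp [ofEdge_comp, T.ghostOp_single_cons, T.vgOp_one_single, *]
  · split_ifs <;> simp [ofEdge_comp, T.ghostOp_single_cons, Ne.symm hef, *]

theorem vgOp_mul_vgOp (v : Γ.V) (g : G) (w : Γ.V) (h : G) :
    T.vgOp v g * T.vgOp w h = if v = T.actV g w then T.vgOp v (g * h) else 0 := by
  refine Finsupp.lhom_ext fun ⟨α, k, β⟩ r => ?_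
  rw [Module.End.mul_apply, T.vgOp_single, apply_ite (T.vgOp v g), map_zero, T.vgOp_single,
    src_actP]
  by_cases hv : v = T.actV g w
  · subst hv
    by_cases hw : w = T.actV h α.src
    · subst hw
      simp only [T.vgOp_single, T.actV_mul, T.actP_mul, T.φP_mul, T.cP_mul, if_true,
        Units.val_mul, mul_assoc, mul_comm (T.cP h α : ℓ)]
    · simp [T.vgOp_single, T.actV_mul, (T.actV_injective g).eq_iff, hw]
  · split_ifs with hw <;> simp_all

theorem vgOp_mul_edgeOp (v : Γ.V) (g : G) (e : Γ.E) :
    T.vgOp v g * edgeOp e = if v = T.actV g (Γ.s e) then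
      (T.c g e : ℓ) • (edgeOp (T.actE g e) * T.vgOp (Γ.r (T.actE g e)) (T.φ g e)) else 0 := by
  refine Finsupp.lhom_ext fun ⟨α, k, β⟩ r => ?_
  have hr_act : Γ.r (T.actE g e) = T.actV (T.φ g e) α.src ↔ Γ.r e = α.src := by
    rw [T.r_act, T.φ_actV, (T.actV_injective g).eq_iff]
  rw [Module.End.mul_apply, edgeOp_single, apply_ite (T.vgOp v g), map_zero]
  split_ifs with hr hv hv
  · rw [LinearMap.smul_apply, Module.End.mul_apply, T.vgOp_single, T.vgOp_single,
      if_pos (hr_act.mpr hr), ofEdge_comp_src, if_pos hv, edgeOp_single,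
      if_pos (by rw [src_actP, T.r_act, T.φ_actV, hr]), Finsupp.smul_single]
    simp only [ofEdge_comp, actP, T.s_act, actL_cons, φP, φL_cons, cP, cL_cons, Units.val_mul,
      smul_eq_mul]
    congr 1
    ring
  · rw [T.vgOp_single, ofEdge_comp_src, if_neg hv, LinearMap.zero_apply]
  · rw [LinearMap.smul_apply, Module.End.mul_apply, T.vgOp_single, if_neg (hr_act.not.mpr hr),
      map_zero, smul_zero]
  · rw [LinearMap.zero_apply]

theorem ghostOp_mul_vgOp_self (f : Γ.E) (h : G) :
    T.ghostOp (T.actE h f) * T.vgOp (T.actV h (Γ.s f)) h =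
      (T.c h f : ℓ) • (T.vgOp (T.actV h (Γ.r f)) (T.φ h f) * T.ghostOp f) := by
  refine Finsupp.lhom_ext fun ⟨⟨u, l⟩, k, β⟩ r => ?_
  rw [LinearMap.smul_apply, Module.End.mul_apply, Module.End.mul_apply, T.vgOp_single]
  by_cases hu : u = Γ.s f
  · subst hu
    rw [if_pos rfl]
    cases l with
    | nil =>
      have hinv : T.actE (h * k)⁻¹ (T.actE h f) = T.actE k⁻¹ f := by
        rw [mul_inv_rev, T.actE_mul, T.actE_inv_act]
      rw [T.actP_mk_nil, T.φP_mk, T.cP_mk, φL_nil, cL_nil, T.ghostOp_single_nil,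
        if_pos (T.s_act h f).symm, T.ghostOp_single_nil, if_pos rfl, T.vgOp_single,
        ofVertex_src, if_pos (T.φ_actV h f _).symm, hinv, T.φ_mul, T.c_mul, T.actE_act_inv,
        T.r_act, ← T.φ_actV h f]
      simp only [actP, ofVertex, φP, cP, φL_nil, cL_nil, actL_nil, Units.val_mul,
        Units.val_one, Finsupp.smul_single, smul_eq_mul]
      congr 1
      ring
    | cons f' l =>
      rw [T.actP_mk_cons, T.φP_mk, T.cP_mk, φL_cons, cL_cons, T.ghostOp_single_cons,
        T.ghostOp_single_cons, T.s_act, (T.actE_injective h).eq_iff]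
      by_cases hf : f' = f
      · subst hf
        rw [if_pos ⟨rfl, rfl⟩, if_pos ⟨rfl, rfl⟩, T.vgOp_single,
          if_pos (T.φ_actV h f' _).symm, T.r_act, ← T.φ_actV h f']
        simp only [actP, φP, cP, Units.val_mul, Finsupp.smul_single, smul_eq_mul]
        congr 1
        ring
      · rw [if_neg fun h' => hf h'.1, if_neg fun h' => hf h'.1, map_zero, smul_zero]
  · have hne : ¬T.actV h (Γ.s f) = T.actV h u := by
      rwa [(T.actV_injective h).eq_iff, eq_comm]
    rw [if_neg hne, map_zero]
    cases l with
    | nil => rw [T.ghostOp_single_nil, if_neg hu, map_zero, smul_zero]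
    | cons f' l => rw [T.ghostOp_single_cons, if_neg fun h' => hu h'.2, map_zero, smul_zero]

theorem ghostOp_mul_vgOp_of_ne {e : Γ.E} {v : Γ.V} (hv : v ≠ Γ.s e) (h : G) :
    T.ghostOp e * T.vgOp v h = 0 := by
  refine Finsupp.lhom_ext fun ⟨⟨u, l⟩, k, β⟩ r => ?_
  rw [Module.End.mul_apply, T.vgOp_single, LinearMap.zero_apply]
  split_ifs with hu
  · have hne : T.actV h u ≠ Γ.s e := hu ▸ hv
    cases l with
    | nil => rw [T.actP_mk_nil, T.ghostOp_single_nil, if_neg hne]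
    | cons f l => rw [T.actP_mk_cons, T.ghostOp_single_cons, if_neg fun h' => hne h'.2]
  · exact map_zero _

theorem ghostOp_mul_vgOp (e : Γ.E) (v : Γ.V) (h : G) :
    T.ghostOp e * T.vgOp v h = if v = Γ.s e then (T.c h (T.actE h⁻¹ e) : ℓ) •
      (T.vgOp (T.actV (T.φ h (T.actE h⁻¹ e)) (Γ.r (T.actE h⁻¹ e))) (T.φ h (T.actE h⁻¹ e)) *
        T.ghostOp (T.actE h⁻¹ e)) else 0 := by
  split_ifs with hv
  · obtain ⟨f, rfl⟩ : ∃ f, T.actE h f = e := ⟨_, T.actE_act_inv h e⟩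
    rw [hv, T.s_act, T.actE_inv_act, T.φ_actV]
    exact T.ghostOp_mul_vgOp_self f h
  · exact T.ghostOp_mul_vgOp_of_ne hv h

/-- Chosen so that the relations `v = v1` and `ge* = (g(r(e))g) e* s(e)` hold by definition. -/
def genOp : CohnGen Γ G → Module.End ℓ (Triple Γ G →₀ ℓ)
  | .v w => T.vgOp w 1
  | .vg w h => T.vgOp w h
  | .e e => edgeOp e
  | .eg e h => edgeOp e * T.vgOp (Γ.r e) h
  | .st e => T.ghostOp e
  | .gst h e => T.vgOp (T.actV h (Γ.r e)) h * T.ghostOp e * T.vgOp (Γ.s e) 1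

theorem lift_genOp_eq_of_cohnRel ⦃a b : FreeCohn ℓ Γ G⦄ (hab : CohnRel T a b) :
    FreeAlgebra.lift ℓ T.genOp a = FreeAlgebra.lift ℓ T.genOp b := by
  cases hab <;>
    simp only [FreeAlgebra.lift_ι_apply, map_mul, map_smul, map_zero, genOp,
      apply_ite (FreeAlgebra.lift ℓ T.genOp)]
  case e_eq e => exact (T.edgeOp_mul_vgOp_one e).symm
  case st_eq e => rw [T.actV_one, T.vgOp_one_mul_ghostOp, T.ghostOp_mul_vgOp_one]
  case eg_eq e g => rw [T.vgOp_one_mul_edgeOp]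
  case st_e e f => exact T.ghostOp_mul_edgeOp e f
  case vg_vg v g w h => exact T.vgOp_mul_vgOp v g w h
  case vg_e v g e => exact T.vgOp_mul_edgeOp v g e
  case st_vg e v h => rw [T.ghostOp_mul_vgOp, mul_assoc, T.ghostOp_mul_vgOp_one]

def rep : CQ T →ₐ[ℓ] Module.End ℓ (Triple Γ G →₀ ℓ) :=
  RingQuot.liftAlgHom ℓ ⟨FreeAlgebra.lift ℓ T.genOp, T.lift_genOp_eq_of_cohnRel⟩

theorem rep_mkC_ι (x : CohnGen Γ G) : T.rep (T.mkC (ι x)) = T.genOp x := by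
  rw [rep, RingQuot.liftAlgHom_mkAlgHom_apply, FreeAlgebra.lift_ι_apply]

theorem rep_xv (v : Γ.V) : T.rep (T.xv v) = T.vgOp v 1 := T.rep_mkC_ι (.v v)

theorem rep_xvg (v : Γ.V) (g : G) : T.rep (T.xvg v g) = T.vgOp v g := T.rep_mkC_ι (.vg v g)

theorem rep_xe (e : Γ.E) : T.rep (T.xe e) = edgeOp e := T.rep_mkC_ι (.e e)

theorem rep_xst (e : Γ.E) : T.rep (T.xst e) = T.ghostOp e := T.rep_mkC_ι (.st e)

end NormalForms

section LinearIndependence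

variable {ℓ : Type} [CommRing ℓ] {Γ : DirGraph} {G : Type} [Group G] (T : TwistedEP ℓ Γ G)

theorem rep_pathElem_single {α : Path Γ} (hα : α.IsGood) (g : G) (β : Path Γ) (r : ℓ) :
    T.rep (T.pathElem α) (Finsupp.single (ofVertex Γ α.rng, g, β) r) =
      Finsupp.single (α, g, β) r := by
  obtain ⟨v, l⟩ := α
  induction l generalizing v with
  | nil =>
    rw [T.pathElem_nil, T.rep_xv]
    exact (T.vgOp_one_single ..).trans (if_pos rfl)
  | cons e l ih =>
    rw [T.pathElem_cons hα.source_eq, map_mul, Module.End.mul_apply, T.rep_xe]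
    rw [rng_cons, ih _ hα.tail, edgeOp_single, if_pos rfl, ofEdge_comp, hα.source_eq]

theorem rep_starElem_single {β : Path Γ} (hβ : β.IsGood) (γ : Path Γ)
    (hlen : γ.length ≤ β.length) (δ : Path Γ) (r : ℓ) :
    T.rep (T.starElem β) (Finsupp.single (γ, 1, δ) r) =
      if γ.edges <+: β.edges ∧ γ.src = β.src then
        Finsupp.single (ofVertex Γ β.rng, 1, ⟨δ.src, δ.edges ++ β.edges.drop γ.length⟩) r
      else 0 := by
  obtain ⟨vb, lb⟩ := β
  obtain ⟨u, la⟩ := γ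
  dsimp only [Path.length] at hlen ⊢
  induction lb generalizing vb u la δ with
  | nil =>
    obtain rfl : la = [] := List.eq_nil_of_length_eq_zero (Nat.le_zero.mp hlen)
    rw [T.starElem_nil, T.rep_xv, T.vgOp_one_single]
    by_cases hu : u = vb
    · subst hu
      simp only [↓reduceIte, List.prefix_rfl, and_self, List.length_nil, List.drop_nil,
        List.append_nil]
      rfl
    · rw [if_neg (Ne.symm hu), if_neg fun h => hu h.2]
  | cons e lb ih =>
    have hs : Γ.s e = vb := hβ.source_eq
    rw [T.starElem_cons, map_mul, Module.End.mul_apply, T.rep_xst]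
    cases la with
    | nil =>
      rw [T.ghostOp_single_nil]
      simp only [inv_one, T.actE_one, T.φ_one, T.c_one, Units.val_one, mul_one]
      by_cases hu : u = vb
      · rw [if_pos (hu.trans hs.symm), if_pos ⟨List.nil_prefix, hu⟩,
          show ofVertex Γ (Γ.r e) = ⟨Γ.r e, []⟩ from rfl, ih _ _ hβ.tail _ _ (Nat.zero_le _),
          if_pos ⟨List.nil_prefix, rfl⟩]
        simp only [Path.comp, ofEdge, List.length_nil, List.drop_zero, List.append_assoc,
          List.cons_append, List.nil_append]
        rfl
      · rw [if_neg fun h => hu (h.trans hs), map_zero, if_neg fun h => hu h.2]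
    | cons a la =>
      rw [T.ghostOp_single_cons]
      by_cases h : a = e ∧ u = vb
      · rw [if_pos ⟨h.1, h.2.trans hs.symm⟩,
          ih _ _ hβ.tail _ _ (Nat.le_of_succ_le_succ hlen)]
        simp only [List.cons_prefix_cons, h.1, h.2, true_and, and_true]
        rfl
      · rw [if_neg fun h' => h ⟨h'.1, h'.2.trans hs⟩, map_zero,
          if_neg fun h' => h ⟨(List.cons_prefix_cons.mp h'.1).1, h'.2⟩]

theorem rep_mixElem_single {α β : Path Γ} (hα : α.IsGood) (hβ : β.IsGood) {g : G}
    (hg : T.actV g β.rng = α.rng) (γ : Path Γ) (hlen : γ.length ≤ β.length) :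
    T.rep (T.mixElem α g β) (Finsupp.single (γ, 1, γ) 1) =
      if γ.edges <+: β.edges ∧ γ.src = β.src then Finsupp.single (α, g, β) 1 else 0 := by
  rw [mixElem, map_mul, map_mul, Module.End.mul_apply, Module.End.mul_apply,
    T.rep_starElem_single hβ γ hlen]
  split_ifs with hγ
  · have hβ_eq : (⟨γ.src, γ.edges ++ β.edges.drop γ.length⟩ : Path Γ) = β := by
      rw [Path.length, List.prefix_iff_eq_append.mp hγ.1, hγ.2]
    rw [hβ_eq, T.rep_xvg, T.vgOp_single, ofVertex_src, if_pos hg.symm, T.actP_ofVertex,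
      T.φP_ofVertex, T.cP_ofVertex, hg, Units.val_one, mul_one, mul_one]
    exact T.rep_pathElem_single hα g β 1
  · simp only [map_zero]

theorem rep_BFam_single_apply (i j : T.BIdx) (hlen : j.1.2.2.length ≤ i.1.2.2.length) :
    T.rep (T.BFam i) (Finsupp.single (j.1.2.2, 1, j.1.2.2) 1) j.1 = if i = j then 1 else 0 := by
  obtain ⟨⟨α, g, β⟩, hα, hβ, hg⟩ := i
  change T.rep (T.mixElem α g β) _ _ = _
  rw [T.rep_mixElem_single hα hβ hg _ hlen]
  split_ifs with hpre hij hij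
  · subst hij
    exact Finsupp.single_eq_same
  · exact Finsupp.single_eq_of_ne fun h => hij (Subtype.ext h.symm)
  · subst hij
    exact absurd ⟨List.prefix_refl _, rfl⟩ hpre
  · rfl

theorem linearIndependent_BFam : LinearIndependent ℓ T.BFam := by
  rw [linearIndependent_iff]
  intro l hl
  by_contra hne
  obtain ⟨j, hj, hmin⟩ := l.support.exists_min_image (fun i => i.1.2.2.length)
    (Finsupp.support_nonempty_iff.mpr hne)
  have hcoeff := congrArg (fun x => T.rep x (Finsupp.single (j.1.2.2, 1, j.1.2.2) 1) j.1) hl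
  simp only [Finsupp.linearCombination_apply, Finsupp.sum, map_sum, map_smul,
    LinearMap.sum_apply, LinearMap.smul_apply, Finsupp.finsetSum_apply, Finsupp.smul_apply,
    smul_eq_mul, map_zero, LinearMap.zero_apply, Finsupp.coe_zero, Pi.zero_apply] at hcoeff
  rw [Finset.sum_eq_single_of_mem j hj fun i hi hij => by
      rw [T.rep_BFam_single_apply i j (hmin i hi), if_neg hij, mul_zero],
    T.rep_BFam_single_apply j j le_rfl, if_pos rfl, mul_one] at hcoeff
  exact Finsupp.mem_support_iff.mp hj hcoeff

end LinearIndependence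

section Span

variable {ℓ : Type} [CommRing ℓ] {Γ : DirGraph} {G : Type} [Group G] (T : TwistedEP ℓ Γ G)

theorem mixElem_mem_span {α β : Path Γ} (hα : α.IsGood) (hβ : β.IsGood) {g : G}
    (hg : T.actV g β.rng = α.rng) : T.mixElem α g β ∈ Submodule.span ℓ (Set.range T.BFam) :=
  Submodule.subset_span ⟨⟨(α, g, β), hα, hβ, hg⟩, rfl⟩

theorem mixElem_vertex (v : Γ.V) (g : G) (β : Path Γ) :
    T.mixElem ⟨v, []⟩ g β = T.xvg v g * T.starElem β := by
  rw [mixElem, T.pathElem_nil, Path.rng_nil, T.xv_mul_xvg, if_pos rfl]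

theorem mul_mem_span_of_forall_mul_BFam_mem {x y : CQ T}
    (hx : ∀ i, x * T.BFam i ∈ Submodule.span ℓ (Set.range T.BFam))
    (hy : y ∈ Submodule.span ℓ (Set.range T.BFam)) :
    x * y ∈ Submodule.span ℓ (Set.range T.BFam) :=
  (Submodule.span_le (p := (Submodule.span ℓ (Set.range T.BFam)).comap (LinearMap.mulLeft ℓ x))
    |>.mpr (Set.range_subset_iff.mpr hx)) hy

theorem xvg_mul_BFam_mem_span (w : Γ.V) (h : G) (i : T.BIdx) :
    T.xvg w h * T.BFam i ∈ Submodule.span ℓ (Set.range T.BFam) := by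
  obtain ⟨⟨α, g, β⟩, hα, hβ, hg⟩ := i
  change T.xvg w h * (T.pathElem α * T.xvg α.rng g * T.starElem β) ∈ _
  rw [← mul_assoc, ← mul_assoc, T.xvg_mul_pathElem hα]
  split_ifs
  · rw [smul_mul_assoc, smul_mul_assoc, mul_assoc (T.pathElem _), T.xvg_mul_xvg,
      if_pos (by rw [T.rng_actP, φP, T.φ_actV_edges])]
    refine Submodule.smul_mem _ _ (T.mixElem_mem_span (T.isGood_actP h hα) hβ ?_)
    rw [T.actV_mul, hg, φP, T.φ_actV_edges, T.rng_actP]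
  · rw [zero_mul, zero_mul]
    exact zero_mem _

theorem xe_mul_BFam_mem_span (e : Γ.E) (i : T.BIdx) :
    T.xe e * T.BFam i ∈ Submodule.span ℓ (Set.range T.BFam) := by
  obtain ⟨⟨α, g, β⟩, hα, hβ, hg⟩ := i
  change T.xe e * (T.pathElem α * T.xvg α.rng g * T.starElem β) ∈ _
  rw [← mul_assoc, ← mul_assoc, T.xe_mul_pathElem]
  split_ifs with he
  · have hrng : ((ofEdge Γ e).comp α).rng = α.rng := by
      rw [ofEdge_comp, rng_cons, he]
    rw [← hrng]
    exact T.mixElem_mem_span (isGood_comp (ofEdge_isGood Γ e) hα he) hβ (hrng ▸ hg)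
  · rw [zero_mul, zero_mul]
    exact zero_mem _

theorem xst_mul_BFam_mem_span (e : Γ.E) (i : T.BIdx) :
    T.xst e * T.BFam i ∈ Submodule.span ℓ (Set.range T.BFam) := by
  obtain ⟨⟨⟨v, l⟩, g, β⟩, hα, hβ, hg⟩ := i
  change T.xst e * T.mixElem ⟨v, l⟩ g β ∈ _
  cases l with
  | nil =>
    rw [T.mixElem_vertex, ← mul_assoc, T.xst_mul_xvg]
    split_ifs with hv
    · set f := T.actE g⁻¹ e
      have hβf : β.rng = Γ.s f := by
        rw [T.s_act, ← hv, ← Path.rng_nil v, ← hg, T.actV_inv_act]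
      rw [smul_mul_assoc, T.xgst_eq_xvg_mul_xst, mul_assoc, ← T.starElem_comp_ofEdge hβf,
        ← T.mixElem_vertex]
      refine Submodule.smul_mem _ _ (T.mixElem_mem_span (ofVertex_isGood Γ _)
        (isGood_comp hβ (ofEdge_isGood Γ f) hβf) ?_)
      rw [Path.rng_comp_ofEdge]
      rfl
    · rw [zero_mul]
      exact zero_mem _
  | cons f l =>
    rw [mixElem, T.pathElem_cons hα.source_eq, ← mul_assoc, ← mul_assoc, ← mul_assoc,
      T.xst_mul_xe]
    split_ifs with hef
    · subst hef
      rw [T.xv_src_mul_pathElem ⟨Γ.r e, l⟩]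
      exact T.mixElem_mem_span hα.tail hβ hg
    · rw [zero_mul, zero_mul, zero_mul]
      exact zero_mem _

theorem xvg_eq_mixElem (v : Γ.V) (g : G) :
    T.xvg v g = T.mixElem ⟨v, []⟩ g ⟨T.actV g⁻¹ v, []⟩ := by
  rw [T.mixElem_vertex, T.starElem_nil, T.xvg_mul_xv, if_pos (T.actV_act_inv g v).symm]

theorem xeg_eq_mixElem (e : Γ.E) (g : G) :
    T.xeg e g = T.mixElem ⟨Γ.s e, [e]⟩ g ⟨T.actV g⁻¹ (Γ.r e), []⟩ := by
  rw [mixElem, T.pathElem_cons rfl, T.pathElem_nil, T.xe_mul_xv, if_pos rfl, T.starElem_nil,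
    mul_assoc, T.xvg_mul_xv, rng_cons, Path.rng_nil, if_pos (T.actV_act_inv g _).symm,
    T.xe_mul_xvg]

theorem xgst_eq_mixElem (g : G) (e : Γ.E) :
    T.xgst g e = T.mixElem ⟨T.actV g (Γ.r e), []⟩ g ⟨Γ.s e, [e]⟩ := by
  rw [T.mixElem_vertex, T.starElem_cons, T.starElem_nil, ← mul_assoc, T.xvg_mul_xv,
    if_pos rfl, T.xgst_eq_xvg_mul_xst]

theorem mkC_ι_mem_span (x : CohnGen Γ G) :
    T.mkC (ι x) ∈ Submodule.span ℓ (Set.range T.BFam) := by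
  have hvg (v : Γ.V) (g : G) : T.xvg v g ∈ Submodule.span ℓ (Set.range T.BFam) :=
    T.xvg_eq_mixElem v g ▸ T.mixElem_mem_span (ofVertex_isGood Γ _) (ofVertex_isGood Γ _)
      (T.actV_act_inv g v)
  have heg (e : Γ.E) (g : G) : T.xeg e g ∈ Submodule.span ℓ (Set.range T.BFam) :=
    T.xeg_eq_mixElem e g ▸ T.mixElem_mem_span (ofEdge_isGood Γ e) (ofVertex_isGood Γ _)
      (T.actV_act_inv g _)
  have hgst (g : G) (e : Γ.E) : T.xgst g e ∈ Submodule.span ℓ (Set.range T.BFam) :=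
    T.xgst_eq_mixElem g e ▸ T.mixElem_mem_span (ofVertex_isGood Γ _) (ofEdge_isGood Γ e) rfl
  cases x with
  | v v => rw [← xv, T.xv_eq]; exact hvg v 1
  | vg v g => exact hvg v g
  | e e => rw [← xe, T.xe_eq]; exact heg e 1
  | eg e g => exact heg e g
  | st e => rw [← xst, T.xst_eq]; exact hgst 1 e
  | gst g e => exact hgst g e

theorem mkC_ι_mul_mem_span (x : CohnGen Γ G) {y : CQ T}
    (hy : y ∈ Submodule.span ℓ (Set.range T.BFam)) :
    T.mkC (ι x) * y ∈ Submodule.span ℓ (Set.range T.BFam) := by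
  have hvg (v : Γ.V) (g : G) {y : CQ T} (hy : y ∈ Submodule.span ℓ (Set.range T.BFam)) :
      T.xvg v g * y ∈ Submodule.span ℓ (Set.range T.BFam) :=
    T.mul_mem_span_of_forall_mul_BFam_mem (T.xvg_mul_BFam_mem_span v g) hy
  have he (e : Γ.E) {y : CQ T} (hy : y ∈ Submodule.span ℓ (Set.range T.BFam)) :
      T.xe e * y ∈ Submodule.span ℓ (Set.range T.BFam) :=
    T.mul_mem_span_of_forall_mul_BFam_mem (T.xe_mul_BFam_mem_span e) hy
  have hst (e : Γ.E) {y : CQ T} (hy : y ∈ Submodule.span ℓ (Set.range T.BFam)) :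
      T.xst e * y ∈ Submodule.span ℓ (Set.range T.BFam) :=
    T.mul_mem_span_of_forall_mul_BFam_mem (T.xst_mul_BFam_mem_span e) hy
  cases x with
  | v v => rw [← xv, T.xv_eq]; exact hvg v 1 hy
  | vg v g => exact hvg v g hy
  | e e => exact he e hy
  | eg e g =>
    rw [← xeg, ← T.xe_mul_xvg, mul_assoc]
    exact he e (hvg _ g hy)
  | st e => exact hst e hy
  | gst g e =>
    rw [← xgst, T.xgst_eq_xvg_mul_xst, mul_assoc]
    exact hvg _ g (hst e hy)

theorem pathElem_mem_adjoin (p : Path Γ) : T.pathElem p ∈ NonUnitalAlgebra.adjoin ℓ T.genSet := by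
  have hfold (l : List Γ.E) {x : CQ T} (hx : x ∈ NonUnitalAlgebra.adjoin ℓ T.genSet) :
      l.foldl (fun a e => a * T.xe e) x ∈ NonUnitalAlgebra.adjoin ℓ T.genSet := by
    induction l generalizing x with
    | nil => exact hx
    | cons e l ih => exact ih (mul_mem hx (NonUnitalAlgebra.subset_adjoin ℓ ⟨.e e, rfl⟩))
  exact hfold p.edges (NonUnitalAlgebra.subset_adjoin ℓ ⟨.v p.src, rfl⟩)

theorem starElem_mem_adjoin (p : Path Γ) : T.starElem p ∈ NonUnitalAlgebra.adjoin ℓ T.genSet := by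
  have hfold (l : List Γ.E) {x : CQ T} (hx : x ∈ NonUnitalAlgebra.adjoin ℓ T.genSet) :
      l.foldr (fun e a => a * T.xst e) x ∈ NonUnitalAlgebra.adjoin ℓ T.genSet := by
    induction l with
    | nil => exact hx
    | cons e l ih => exact mul_mem ih (NonUnitalAlgebra.subset_adjoin ℓ ⟨.st e, rfl⟩)
  exact hfold p.edges (NonUnitalAlgebra.subset_adjoin ℓ ⟨.v p.rng, rfl⟩)

theorem span_BFam_le_cohnPart : Submodule.span ℓ (Set.range T.BFam) ≤ T.cohnPart := by
  rw [Submodule.span_le, Set.range_subset_iff]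
  rintro ⟨⟨α, g, β⟩, -⟩
  change T.mixElem α g β ∈ NonUnitalAlgebra.adjoin ℓ T.genSet
  exact mul_mem (mul_mem (T.pathElem_mem_adjoin α)
    (NonUnitalAlgebra.subset_adjoin ℓ ⟨.vg α.rng g, rfl⟩)) (T.starElem_mem_adjoin β)

theorem cohnPart_le_span_BFam : T.cohnPart ≤ Submodule.span ℓ (Set.range T.BFam) := by
  intro x hx
  refine (NonUnitalAlgebra.adjoin_induction
    (p := fun x _ => x ∈ Submodule.span ℓ (Set.range T.BFam) ∧
      ∀ y ∈ Submodule.span ℓ (Set.range T.BFam), x * y ∈ Submodule.span ℓ (Set.range T.BFam))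
    ?_ ?_ ?_ ?_ ?_ hx).1
  · rintro _ ⟨x, rfl⟩
    exact ⟨T.mkC_ι_mem_span x, fun y hy => T.mkC_ι_mul_mem_span x hy⟩
  · rintro x y - - ⟨hx, hxm⟩ ⟨hy, hym⟩
    exact ⟨add_mem hx hy, fun z hz => (add_mul x y z).symm ▸ add_mem (hxm z hz) (hym z hz)⟩
  · exact ⟨zero_mem _, fun y _ => (zero_mul y).symm ▸ zero_mem _⟩
  · rintro x y - - ⟨-, hxm⟩ ⟨hy, hym⟩
    exact ⟨hxm y hy, fun z hz => (mul_assoc x y z).symm ▸ hxm _ (hym z hz)⟩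
  · rintro r x - ⟨hx, hxm⟩
    exact ⟨Submodule.smul_mem _ r hx,
      fun y hy => (smul_mul_assoc r x y).symm ▸ Submodule.smul_mem _ r (hxm y hy)⟩

end Span

end TwistedEP

open DirGraph in
/-- **Statement 3** (Corollary `coro:cohnpres`).  The Cohn algebra
`C(G,E,φ_c)` of a twisted Exel–Pardo tuple is a free `ℓ`-module with basis
`ℬ = {α g β* : α, β ∈ 𝒫(E), g ∈ G, g(r(β)) = r(α)}`. -/
theorem cohn_algebra_free_with_basis
    (ℓ : Type) [CommRing ℓ] (Γ : DirGraph) (G : Type) [Group G]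
    (T : TwistedEP ℓ Γ G) :
    LinearIndependent ℓ T.BFam ∧
      Submodule.span ℓ (Set.range T.BFam) = T.cohnPart :=
  ⟨T.linearIndependent_BFam, le_antisymm T.span_BFam_le_cohnPart T.cohnPart_le_span_BFam⟩
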